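/- Let π be a linear order on Σ and π^R its reversal (a <_{π^R} b iff b <_π a), and let s be a primitive string of length n over Σ sorted by a context adaptive ordering in which π_x ∈ {π, π^R} for every string x (a ± ordering). Let z be a string and x₁ ∈ Σ with |z| + 1 < n. Let u and v be rotations of s that both have prefix z, both end with x₁, and whose symbols at position |z| + 1 differ; let u' and v' be their right shifts (which both have prefix x₁·z). If π_{x₁z} = π_z then u ≺ v if and only if u' ≺ v'; if π_{x₁z} = (π_z)^R then u ≺ v if and only if v' ≺ u'. -/

import Mathlib

open scoped Classical

variable {A : Type*}

/-- Longest common prefix of two lists. -/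
def lcp [DecidableEq A] : List A → List A → List A
  | a :: as, b :: bs => if a = b then a :: lcp as bs else []
  | _, _ => []

/-- A string is primitive if its cyclic rotations are pairwise distinct. -/
def Primitive (s : List A) : Prop :=
  ∀ i j, i < s.length → j < s.length → s.rotate i = s.rotate j → i = j

/-- The context-adaptive comparison relation on rotations. -/
def Prec [DecidableEq A] (P : List A → A → A → Prop) (u v : List A) : Prop :=
  ∃ a b, u[(lcp u v).length]? = some a ∧ v[(lcp u v).length]? = some b ∧
    P (lcp u v) a b

/-- The index of the right shift of the rotation `R_i` of a string of length
`n`, i.e. `(i - 1) mod n`. -/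
def rshift (n i : ℕ) : ℕ := (i + n - 1) % n

/-!
Two rotations that agree on `z` and then differ, say in symbols `a ≠ b`, are compared by
`P z a b`. Their right shifts agree on `x₁ :: z` and still differ in `a` and `b`, because
`|z| + 1 < n` keeps `z ++ [a]` clear of the last symbol that the shift moves to the front; so
they are compared by `P (x₁ :: z) a b` (or `P (x₁ :: z) b a` in swapped order), and the two
cases of the hypothesis on `P (x₁ :: z)` turn this into `P z a b`.
-/

theorem lcp_append_cons_of_ne [DecidableEq A] (z : List A) {a b : A} (u v : List A)
    (hab : a ≠ b) : lcp (z ++ a :: u) (z ++ b :: v) = z := by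
  induction z with
  | nil => simp [lcp, hab]
  | cons c z ih => simp [lcp, ih]

theorem prec_iff_of_prefix [DecidableEq A] (P : List A → A → A → Prop) {z u v : List A}
    {a b : A} (hab : a ≠ b) (hu : z ++ [a] <+: u) (hv : z ++ [b] <+: v) :
    Prec P u v ↔ P z a b := by
  obtain ⟨u, rfl⟩ := hu
  obtain ⟨v, rfl⟩ := hv
  simp [Prec, lcp_append_cons_of_ne z u v hab]

theorem List.IsPrefix.append_singleton_of_getElem? {z l : List A} {a : A} (hz : z <+: l)
    (ha : l[z.length]? = some a) : z ++ [a] <+: l := by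
  obtain ⟨t, rfl⟩ := hz
  cases t with
  | nil => simp at ha
  | cons b t => simp_all

theorem rotate_rshift_of_getLast? {s : List A} {i : ℕ} {x : A}
    (hx : (s.rotate i).getLast? = some x) :
    s.rotate (rshift s.length i) = x :: (s.rotate i).dropLast := by
  set w := (s.rotate i).dropLast
  have hsplit : s.rotate i = w ++ [x] := List.dropLast_append_getLast? _ hx |>.symm
  have hlen : s.length = w.length + 1 := by
    rw [← List.length_rotate s i, hsplit, List.length_append, List.length_singleton]
  rw [rshift, List.rotate_mod, show i + s.length - 1 = i + w.length by omega,
    ← List.rotate_rotate, hsplit, List.rotate_append_length_eq]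
  rfl

theorem cons_prefix_rotate_rshift {s p : List A} {i : ℕ} {x : A}
    (hx : (s.rotate i).getLast? = some x) (hp : p <+: s.rotate i) (hlen : p.length < s.length) :
    x :: p <+: s.rotate (rshift s.length i) := by
  rw [rotate_rshift_of_getLast? hx, List.cons_prefix_cons, List.dropLast_eq_take,
    List.prefix_take_iff, List.length_rotate]
  exact ⟨rfl, hp, by omega⟩

theorem stmt13_general [DecidableEq A]
    (P : List A → A → A → Prop)
    (s : List A)
    (z : List A) (x₁ : A) (hzn : z.length + 1 < s.length)
    (i j : ℕ)
    (hzi : z <+: s.rotate i) (hzj : z <+: s.rotate j)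
    (hli : (s.rotate i).getLast? = some x₁)
    (hlj : (s.rotate j).getLast? = some x₁)
    (hdiff : ∃ a b, (s.rotate i)[z.length]? = some a ∧
      (s.rotate j)[z.length]? = some b ∧ a ≠ b) :
    (P (x₁ :: z) = P z →
      (Prec P (s.rotate i) (s.rotate j) ↔
        Prec P (s.rotate (rshift s.length i)) (s.rotate (rshift s.length j)))) ∧
    ((P (x₁ :: z) = fun a b => P z b a) →
      (Prec P (s.rotate i) (s.rotate j) ↔
        Prec P (s.rotate (rshift s.length j)) (s.rotate (rshift s.length i)))) := by
  obtain ⟨a, b, ha, hb, hab⟩ := hdiff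
  have hu := hzi.append_singleton_of_getElem? ha
  have hv := hzj.append_singleton_of_getElem? hb
  have hlen : ∀ c : A, (z ++ [c]).length < s.length := fun c => by simpa using hzn
  have hu' : x₁ :: z ++ [a] <+: _ := cons_prefix_rotate_rshift hli hu (hlen a)
  have hv' : x₁ :: z ++ [b] <+: _ := cons_prefix_rotate_rshift hlj hv (hlen b)
  rw [prec_iff_of_prefix P hab hu hv, prec_iff_of_prefix P hab hu' hv',
    prec_iff_of_prefix P hab.symm hv' hu']
  exact ⟨fun h => by rw [h], fun h => by rw [h]⟩

/-- ± orderings.  Fix a linear order `π` on `Σ` and a context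
adaptive ordering `P` with `P x ∈ {π, π^R}` for every `x`.  Let `u = R_i`,
`v = R_j` be rotations that both have prefix `z`, both end with `x₁`, and whose
symbols at position `|z|+1` differ; let `u'`, `v'` be their right shifts.  If
`P (x₁·z) = P z` then `u ≺ v ↔ u' ≺ v'`; if `P (x₁·z) = (P z)^R` then
`u ≺ v ↔ v' ≺ u'`. -/
theorem stmt13 [Fintype A] [DecidableEq A]
    (π : A → A → Prop) (hπ : IsStrictTotalOrder A π)
    (P : List A → A → A → Prop)
    (hpm : ∀ x : List A, P x = π ∨ P x = fun a b => π b a)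
    (s : List A) (hs : 1 ≤ s.length) (hprim : Primitive s)
    (z : List A) (x₁ : A) (hzn : z.length + 1 < s.length)
    (i j : ℕ) (hi : i < s.length) (hj : j < s.length)
    (hzi : z <+: s.rotate i) (hzj : z <+: s.rotate j)
    (hli : (s.rotate i).getLast? = some x₁)
    (hlj : (s.rotate j).getLast? = some x₁)
    (hdiff : ∃ a b, (s.rotate i)[z.length]? = some a ∧
      (s.rotate j)[z.length]? = some b ∧ a ≠ b) :
    (P (x₁ :: z) = P z →
      (Prec P (s.rotate i) (s.rotate j) ↔
        Prec P (s.rotate (rshift s.length i)) (s.rotate (rshift s.length j)))) ∧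
    ((P (x₁ :: z) = fun a b => P z b a) →
      (Prec P (s.rotate i) (s.rotate j) ↔
        Prec P (s.rotate (rshift s.length j)) (s.rotate (rshift s.length i)))) :=
  stmt13_general P s z x₁ hzn i j hzi hzj hli hlj hdiff
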